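/- Let u, v ∈ ℂ. There exists β ∈ ℂ such that 𝔮_u + β·𝔮_v ∈ D(T) if and only if A(u,v) = 0, and in the affirmative case β is uniquely determined and equals −C(u,v). -/

import Mathlib

open Filter Topology MeasureTheory

noncomputable section

/-- Action of the Jacobi matrix `J` on a complex sequence:
`(Jc)ₙ = aₙ₋₁cₙ₋₁ + bₙcₙ + aₙcₙ₊₁` with `a₋₁ := 0`. -/
def jacobiMul (a b : ℕ → ℝ) (c : ℕ → ℂ) : ℕ → ℂ
  | 0 => (b 0 : ℂ) * c 0 + (a 0 : ℂ) * c 1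
  | n + 1 => (a n : ℂ) * c n + (b (n + 1) : ℂ) * c (n + 1) + (a (n + 1) : ℂ) * c (n + 2)

/-- `jacobiGraph a b f g` means: `f` belongs to the domain `D(T)` of the closure `T` of the
Jacobi matrix acting on the finitely supported sequences, and `T f = g`; i.e. there are
finitely supported sequences `u k → f` in `ℓ²` such that `J (u k) → g` in `ℓ²`. -/
def jacobiGraph (a b : ℕ → ℝ) (f g : ℕ → ℂ) : Prop :=
  ∃ u : ℕ → ℕ → ℂ,
    (∀ k, (Function.support (u k)).Finite) ∧
    (∀ k, Summable fun n => ‖u k n - f n‖ ^ 2) ∧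
    Tendsto (fun k => ∑' n, ‖u k n - f n‖ ^ 2) atTop (𝓝 0) ∧
    (∀ k, Summable fun n => ‖jacobiMul a b (u k) n - g n‖ ^ 2) ∧
    Tendsto (fun k => ∑' n, ‖jacobiMul a b (u k) n - g n‖ ^ 2) atTop (𝓝 0)

/-- Membership in the domain `D(T)` of the Jacobi operator. -/
def inDomT (a b : ℕ → ℝ) (f : ℕ → ℂ) : Prop := ∃ g, jacobiGraph a b f g

/-- The `ℓ²` norm of a complex sequence. -/
def l2norm (f : ℕ → ℂ) : ℝ := Real.sqrt (∑' n, ‖f n‖ ^ 2)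

/-- The data of an indeterminate Hamburger moment problem: Jacobi parameters `a`, `b`,
the orthonormal polynomials `p` and second-kind polynomials `q` (as entire functions),
determined by the three-term recurrence, together with the indeterminacy condition
`∑ₙ (|pₙ(z)|² + |qₙ(z)|²) < ∞` for all `z`. -/
structure JacobiSetup where
  a : ℕ → ℝ
  b : ℕ → ℝ
  ha : ∀ n, 0 < a n
  p : ℕ → ℂ → ℂ
  q : ℕ → ℂ → ℂ
  hp0 : ∀ z, p 0 z = 1
  hp1 : ∀ z, p 1 z = (z - (b 0 : ℂ)) / (a 0 : ℂ)
  hq0 : ∀ z, q 0 z = 0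
  hq1 : ∀ z, q 1 z = 1 / (a 0 : ℂ)
  hrecp : ∀ n z, z * p (n + 1) z =
    (a (n + 1) : ℂ) * p (n + 2) z + (b (n + 1) : ℂ) * p (n + 1) z + (a n : ℂ) * p n z
  hrecq : ∀ n z, z * q (n + 1) z =
    (a (n + 1) : ℂ) * q (n + 2) z + (b (n + 1) : ℂ) * q (n + 1) z + (a n : ℂ) * q n z
  indet : ∀ z : ℂ, Summable fun n => ‖p n z‖ ^ 2 + ‖q n z‖ ^ 2

/-- The Nevanlinna function `A(u,v)`. -/
def nevA (S : JacobiSetup) (u v : ℂ) : ℂ := (u - v) * ∑' k, S.q k u * S.q k v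
/-- The Nevanlinna function `B(u,v)`. -/
def nevB (S : JacobiSetup) (u v : ℂ) : ℂ := -1 + (u - v) * ∑' k, S.p k u * S.q k v
/-- The Nevanlinna function `C(u,v)`. -/
def nevC (S : JacobiSetup) (u v : ℂ) : ℂ := 1 + (u - v) * ∑' k, S.q k u * S.p k v
/-- The Nevanlinna function `D(u,v)`. -/
def nevD (S : JacobiSetup) (u v : ℂ) : ℂ := (u - v) * ∑' k, S.p k u * S.p k v

/-!
Green's formula `∑_{n ≤ N} ((Jx)ₙ yₙ - xₙ (Jy)ₙ) = W_N(x, y)`, with the Wronskian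
`W_N(x, y) = a_N (x_{N+1} y_N - x_N y_{N+1})`, describes `D(T)`: if `x, Jx ∈ ℓ²`, then
`x ∈ D(T)` iff `W_N(x, 𝔭_v) → 0` and `W_N(x, 𝔮_v) → 0`. The conditions are necessary because
finitely supported approximants have eventually vanishing Wronskians, so that `T` is symmetric
against every `y` with `y, Jy ∈ ℓ²`. They are sufficient because `W_N(𝔮_v, 𝔭_v) = 1` lets one
add `μ_N 𝔭_v + ν_N 𝔮_v`, with `μ_N, ν_N → 0`, to make `x` vanish at `N` and `N + 1`; the
truncation to `[0, N]` of the result then commutes with `J`.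
For `x = 𝔮_u + β 𝔮_v`, Green's formula gives `W_N(x, 𝔮_v) → A(u, v)` and
`W_N(x, 𝔭_v) → C(u, v) + β`.
-/

open scoped ENNReal

section L2

variable {α : Type*} {E : α → Type*} [∀ i, NormedAddCommGroup (E i)]

theorem memℓp_two_iff {f : ∀ i, E i} : Memℓp f 2 ↔ Summable fun i => ‖f i‖ ^ 2 := by
  rw [memℓp_gen_iff (by norm_num)]
  norm_num

theorem memℓp_of_finite_support {p : ℝ≥0∞} {f : ∀ i, E i} (hf : {i | f i ≠ 0}.Finite) :
    Memℓp f p :=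
  (memℓp_zero hf).of_exponent_ge bot_le

theorem lp.norm_sq_eq_tsum (f : lp E 2) : ‖f‖ ^ 2 = ∑' i, ‖f i‖ ^ 2 := by
  simpa using lp.norm_rpow_eq_tsum (p := 2) (by norm_num) f

theorem lp.tendsto_iff_tsum_norm_sub_sq {ι : Type*} {l : Filter ι} {U : ι → lp E 2}
    {F : lp E 2} :
    Tendsto U l (𝓝 F) ↔ Tendsto (fun k => ∑' i, ‖U k i - F i‖ ^ 2) l (𝓝 0) := by
  have h : ∀ k, ∑' i, ‖U k i - F i‖ ^ 2 = ‖U k - F‖ ^ 2 := fun k => by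
    rw [lp.norm_sq_eq_tsum]; rfl
  simp_rw [h]
  rw [tendsto_iff_norm_sub_tendsto_zero]
  constructor
  · intro h; simpa using h.pow 2
  · intro h; simpa using h.sqrt

end L2

section Truncation

variable {E : Type*} [NormedAddCommGroup E] {p : ℝ≥0∞}

theorem lp.coeFn_sum_single_Iic (F : lp (fun _ : ℕ => E) p) (N : ℕ) :
    ⇑(∑ i ∈ Finset.Iic N, lp.single p i (F i)) = (Set.Iic N).indicator F := by
  funext n
  rw [lp.coeFn_sum, Finset.sum_apply]
  simp only [lp.coeFn_single, Finset.sum_pi_single, Finset.mem_Iic, Set.indicator_apply,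
    Set.mem_Iic]

theorem lp.tendsto_sum_single_Iic [Fact (1 ≤ p)] (hp : p ≠ ⊤) (F : lp (fun _ : ℕ => E) p) :
    Tendsto (fun N => ∑ i ∈ Finset.Iic N, lp.single p i (F i)) atTop (𝓝 F) :=
  (lp.hasSum_single hp F).comp tendsto_finset_Iic_atTop_atTop

end Truncation

section Pairing

variable {α 𝕜 : Type*} [RCLike 𝕜]

theorem Memℓp.summable_mul {f g : α → 𝕜} (hf : Memℓp f 2) (hg : Memℓp g 2) :
    Summable fun i => f i * g i := by
  have h := lp.summable_mul (by simpa using Real.HolderConjugate.two_two) ⟨f, hf⟩ ⟨g, hg⟩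
  exact Summable.of_norm (by simpa only [norm_mul] using h)

theorem lp.norm_tsum_mul_le (f g : lp (fun _ : α => 𝕜) 2) : ‖∑' i, f i * g i‖ ≤ ‖f‖ * ‖g‖ := by
  have h := lp.tsum_mul_le_mul_norm (by simpa using Real.HolderConjugate.two_two) f g
  refine (norm_tsum_le_tsum_norm ?_).trans ?_
  · simpa only [norm_mul] using h.1
  · simpa only [norm_mul] using h.2

theorem lp.continuous_tsum_mul (g : lp (fun _ : α => 𝕜) 2) :
    Continuous fun f : lp (fun _ : α => 𝕜) 2 => ∑' i, f i * g i := by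
  refine (LipschitzWith.of_dist_le_mul (K := ‖g‖₊) fun f f' => ?_).continuous
  rw [dist_eq_norm, dist_eq_norm,
    ← (f.prop.summable_mul g.prop).tsum_sub (f'.prop.summable_mul g.prop)]
  simp only [← sub_mul, coe_nnnorm, mul_comm ‖g‖]
  exact lp.norm_tsum_mul_le (f - f') g

end Pairing

local notation "ℓ²" => lp (fun _ : ℕ => ℂ) 2

def TendstoL2 (u : ℕ → ℕ → ℂ) (f : ℕ → ℂ) : Prop :=
  (∀ k, Summable fun n => ‖u k n - f n‖ ^ 2) ∧
    Tendsto (fun k => ∑' n, ‖u k n - f n‖ ^ 2) atTop (𝓝 0)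

theorem tendstoL2_coe_iff {U : ℕ → ℓ²} {F : ℓ²} :
    TendstoL2 (fun k => ⇑(U k)) F ↔ Tendsto U atTop (𝓝 F) := by
  refine ⟨fun h => lp.tendsto_iff_tsum_norm_sub_sq.mpr h.2, fun h =>
    ⟨fun k => memℓp_two_iff.mp (U k - F).prop, lp.tendsto_iff_tsum_norm_sub_sq.mp h⟩⟩

namespace TendstoL2

variable {u : ℕ → ℕ → ℂ} {f : ℕ → ℂ}

theorem memℓp (h : TendstoL2 u f) (hu : ∀ k, Memℓp (u k) 2) : Memℓp f 2 := by
  have hsub : Memℓp (u 0 - f) 2 := memℓp_two_iff.mpr (h.1 0)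
  simpa using (hu 0).sub hsub

theorem tendsto_lp (h : TendstoL2 u f) (hu : ∀ k, Memℓp (u k) 2) :
    Tendsto (fun k => (⟨u k, hu k⟩ : ℓ²)) atTop (𝓝 ⟨f, h.memℓp hu⟩) :=
  tendstoL2_coe_iff.mp h

theorem tendsto_apply (h : TendstoL2 u f) (hu : ∀ k, Memℓp (u k) 2) (n : ℕ) :
    Tendsto (fun k => u k n) atTop (𝓝 (f n)) :=
  ((lp.lipschitzWith_one_eval 2 n).continuous.tendsto _).comp (h.tendsto_lp hu)

theorem tendsto_tsum_mul (h : TendstoL2 u f) (hu : ∀ k, Memℓp (u k) 2) {y : ℕ → ℂ}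
    (hy : Memℓp y 2) :
    Tendsto (fun k => ∑' n, u k n * y n) atTop (𝓝 (∑' n, f n * y n)) :=
  ((lp.continuous_tsum_mul ⟨y, hy⟩).tendsto _).comp (h.tendsto_lp hu)

end TendstoL2

theorem tendstoL2_indicator_Iic_add_smul {x y z : ℕ → ℂ} (hx : Memℓp x 2) (hy : Memℓp y 2)
    (hz : Memℓp z 2) {μ ν : ℕ → ℂ} (hμ : Tendsto μ atTop (𝓝 0)) (hν : Tendsto ν atTop (𝓝 0)) :
    TendstoL2 (fun N => (Set.Iic N).indicator (x + μ N • y + ν N • z)) x := by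
  set X : ℓ² := ⟨x, hx⟩
  set Y : ℓ² := ⟨y, hy⟩
  set Z : ℓ² := ⟨z, hz⟩
  let trunc (F : ℓ²) (N : ℕ) : ℓ² := ∑ i ∈ Finset.Iic N, lp.single 2 i (F i)
  have htrunc (F : ℓ²) : Tendsto (trunc F) atTop (𝓝 F) :=
    lp.tendsto_sum_single_Iic ENNReal.ofNat_ne_top F
  have hlim : Tendsto (fun N => trunc X N + μ N • trunc Y N + ν N • trunc Z N) atTop (𝓝 X) := by
    simpa using ((htrunc X).add (hμ.smul (htrunc Y))).add (hν.smul (htrunc Z))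
  have hcoe (N : ℕ) : ⇑(trunc X N + μ N • trunc Y N + ν N • trunc Z N) =
      (Set.Iic N).indicator (x + μ N • y + ν N • z) := by
    simp only [trunc, lp.coeFn_add, lp.coeFn_smul, lp.coeFn_sum_single_Iic]
    ext n
    by_cases hn : n ∈ Set.Iic N <;> simp [hn, X, Y, Z]
  simpa only [hcoe] using tendstoL2_coe_iff.mpr hlim

section JacobiOperator

variable (a b : ℕ → ℝ)

def jacobiWronskian (x y : ℕ → ℂ) (N : ℕ) : ℂ := a N * (x (N + 1) * y N - x N * y (N + 1))

theorem jacobiMul_add (x y : ℕ → ℂ) :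
    jacobiMul a b (x + y) = jacobiMul a b x + jacobiMul a b y := by
  funext n; cases n <;> simp only [jacobiMul, Pi.add_apply] <;> ring

theorem jacobiMul_smul (c : ℂ) (x : ℕ → ℂ) : jacobiMul a b (c • x) = c • jacobiMul a b x := by
  funext n; cases n <;> simp only [jacobiMul, Pi.smul_apply, smul_eq_mul] <;> ring

theorem continuous_jacobiMul : Continuous (jacobiMul a b) :=
  continuous_pi fun n => by cases n <;> simp only [jacobiMul] <;> fun_prop

theorem sum_range_jacobiMul_mul_sub (x y : ℕ → ℂ) (N : ℕ) :
    ∑ n ∈ Finset.range (N + 1), (jacobiMul a b x n * y n - x n * jacobiMul a b y n) =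
      jacobiWronskian a x y N := by
  induction N with
  | zero => simp [jacobiMul, jacobiWronskian]; ring
  | succ N ih =>
    rw [Finset.sum_range_succ, ih]
    simp only [jacobiMul, jacobiWronskian]
    ring

variable {a b}

theorem support_jacobiMul_subset {x : ℕ → ℂ} {M : ℕ} (hx : Function.support x ⊆ Set.Iic M) :
    Function.support (jacobiMul a b x) ⊆ Set.Iic (M + 1) := by
  have hx' : ∀ n, M < n → x n = 0 := fun n hn =>
    Function.notMem_support.mp fun h => (hx h).not_gt hn
  intro n hn
  by_contra hnM
  rcases n with _ | m
  · simp at hnM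
  · simp only [Set.mem_Iic, not_le] at hnM
    refine hn ?_
    simp only [jacobiMul, hx' m (by omega), hx' (m + 1) (by omega), hx' (m + 2) (by omega)]
    ring

theorem tsum_jacobiMul_mul_of_support_subset {x : ℕ → ℂ} {M : ℕ}
    (hx : Function.support x ⊆ Set.Iic M) (y : ℕ → ℂ) :
    ∑' n, jacobiMul a b x n * y n = ∑' n, x n * jacobiMul a b y n := by
  have hxM : x (M + 1) = 0 ∧ x (M + 2) = 0 := by
    constructor <;> exact Function.notMem_support.mp fun h => by simpa using hx h
  have hrange : Set.Iic (M + 1) = ↑(Finset.range (M + 2)) := by ext; simp [Nat.lt_succ_iff]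
  rw [tsum_eq_sum' (s := Finset.range (M + 2)) (((Function.support_mul_subset_left _ _).trans
      (support_jacobiMul_subset hx)).trans hrange.le),
    tsum_eq_sum' (s := Finset.range (M + 2)) (((Function.support_mul_subset_left _ _).trans
      (hx.trans (Set.Iic_subset_Iic.mpr M.le_succ))).trans hrange.le),
    ← sub_eq_zero, ← Finset.sum_sub_distrib, sum_range_jacobiMul_mul_sub, jacobiWronskian,
    hxM.1, hxM.2]
  ring

theorem jacobiMul_indicator_Iic {h : ℕ → ℂ} {N : ℕ} (hN : h N = 0) (hN1 : h (N + 1) = 0) :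
    jacobiMul a b ((Set.Iic N).indicator h) = (Set.Iic N).indicator (jacobiMul a b h) := by
  have hle : ∀ m ≤ N + 1, (Set.Iic N).indicator h m = h m := fun m hm => by
    rcases hm.lt_or_eq with hm | rfl
    · exact Set.indicator_of_mem (Set.mem_Iic.mpr (Nat.lt_succ_iff.mp hm)) h
    · rw [hN1, Set.indicator_of_notMem (by simp)]
  have hge : ∀ m, N ≤ m → (Set.Iic N).indicator h m = 0 := fun m hm => by
    rcases hm.eq_or_lt with rfl | hm
    · rw [hle N (by omega), hN]
    · exact Set.indicator_of_notMem (by simpa using hm) h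
  funext n
  by_cases hn : n ≤ N
  · rw [Set.indicator_of_mem (Set.mem_Iic.mpr hn)]
    rcases n with _ | m
    · simp only [jacobiMul, hle 0 (by omega), hle 1 (by omega)]
    · simp only [jacobiMul, hle m (by omega), hle (m + 1) (by omega), hle (m + 2) (by omega)]
  · rw [Set.indicator_of_notMem (by simpa using hn)]
    obtain ⟨m, rfl⟩ := Nat.exists_eq_add_one.mpr (by omega : 0 < n)
    simp only [jacobiMul, hge m (by omega), hge (m + 1) (by omega), hge (m + 2) (by omega)]
    ring

end JacobiOperator

section Domain

variable {a b : ℕ → ℝ}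

theorem jacobiGraph_iff {f g : ℕ → ℂ} :
    jacobiGraph a b f g ↔ ∃ u : ℕ → ℕ → ℂ, (∀ k, (Function.support (u k)).Finite) ∧
      TendstoL2 u f ∧ TendstoL2 (fun k => jacobiMul a b (u k)) g := by
  simp only [jacobiGraph, TendstoL2, and_assoc]

theorem finite_support_jacobiMul {x : ℕ → ℂ} (hx : (Function.support x).Finite) :
    (Function.support (jacobiMul a b x)).Finite := by
  obtain ⟨M, hM⟩ := hx.bddAbove
  exact (Set.finite_Iic _).subset (support_jacobiMul_subset hM)

namespace jacobiGraph

variable {f g : ℕ → ℂ}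

theorem memℓp (h : jacobiGraph a b f g) : Memℓp f 2 ∧ Memℓp g 2 := by
  obtain ⟨u, hfin, hu, hJu⟩ := jacobiGraph_iff.mp h
  exact ⟨hu.memℓp fun k => memℓp_of_finite_support (hfin k),
    hJu.memℓp fun k => memℓp_of_finite_support (finite_support_jacobiMul (hfin k))⟩

theorem jacobiMul_eq (h : jacobiGraph a b f g) : jacobiMul a b f = g := by
  obtain ⟨u, hfin, hu, hJu⟩ := jacobiGraph_iff.mp h
  have hlim := tendsto_pi_nhds.mpr (hu.tendsto_apply fun k => memℓp_of_finite_support (hfin k))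
  have hJlim := tendsto_pi_nhds.mpr
    (hJu.tendsto_apply fun k => memℓp_of_finite_support (finite_support_jacobiMul (hfin k)))
  exact tendsto_nhds_unique (((continuous_jacobiMul a b).tendsto f).comp hlim) hJlim

theorem tsum_mul_eq_tsum_mul_jacobiMul (h : jacobiGraph a b f g) {y : ℕ → ℂ}
    (hy : Memℓp y 2) (hJy : Memℓp (jacobiMul a b y) 2) :
    ∑' n, g n * y n = ∑' n, f n * jacobiMul a b y n := by
  obtain ⟨u, hfin, hu, hJu⟩ := jacobiGraph_iff.mp h
  have hsymm (k : ℕ) : ∑' n, jacobiMul a b (u k) n * y n = ∑' n, u k n * jacobiMul a b y n := by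
    obtain ⟨M, hM⟩ := (hfin k).bddAbove
    exact tsum_jacobiMul_mul_of_support_subset hM y
  refine tendsto_nhds_unique ?_
    (hu.tendsto_tsum_mul (fun k => memℓp_of_finite_support (hfin k)) hJy)
  simpa only [hsymm] using hJu.tendsto_tsum_mul
    (fun k => memℓp_of_finite_support (finite_support_jacobiMul (hfin k))) hy

theorem tendsto_wronskian (h : jacobiGraph a b f g) {y : ℕ → ℂ}
    (hy : Memℓp y 2) (hJy : Memℓp (jacobiMul a b y) 2) :
    Tendsto (jacobiWronskian a f y) atTop (𝓝 0) := by
  obtain ⟨hf, hg⟩ := h.memℓp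
  have hsum : HasSum (fun n => jacobiMul a b f n * y n - f n * jacobiMul a b y n) 0 := by
    simpa only [h.jacobiMul_eq, h.tsum_mul_eq_tsum_mul_jacobiMul hy hJy, sub_self] using
      (hg.summable_mul hy).hasSum.sub (hf.summable_mul hJy).hasSum
  simpa only [Function.comp_def, sum_range_jacobiMul_mul_sub] using
    hsum.tendsto_sum_nat.comp (tendsto_add_atTop_nat 1)

end jacobiGraph

theorem jacobiGraph_of_tendsto_wronskian {x y z : ℕ → ℂ} (hx : Memℓp x 2)
    (hJx : Memℓp (jacobiMul a b x) 2) (hy : Memℓp y 2) (hJy : Memℓp (jacobiMul a b y) 2)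
    (hz : Memℓp z 2) (hJz : Memℓp (jacobiMul a b z) 2) (hzy : ∀ N, jacobiWronskian a z y N = 1)
    (hxy : Tendsto (jacobiWronskian a x y) atTop (𝓝 0))
    (hxz : Tendsto (jacobiWronskian a x z) atTop (𝓝 0)) :
    jacobiGraph a b x (jacobiMul a b x) := by
  -- Cramer's rule for `x + μ N • y + ν N • z` to vanish at `N` and `N + 1`, as `W_N(z, y) = 1`
  set μ := jacobiWronskian a x z
  set ν := fun N => -jacobiWronskian a x y N
  have hν : Tendsto ν atTop (𝓝 0) := by simpa using hxy.neg
  have hvanish (N : ℕ) :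
      (x + μ N • y + ν N • z) N = 0 ∧ (x + μ N • y + ν N • z) (N + 1) = 0 := by
    have hN := hzy N
    simp only [jacobiWronskian, Pi.add_apply, Pi.smul_apply, smul_eq_mul, μ, ν] at hN ⊢
    constructor
    · linear_combination (-x N) * hN
    · linear_combination (-x (N + 1)) * hN
  have hJ (N : ℕ) : jacobiMul a b ((Set.Iic N).indicator (x + μ N • y + ν N • z)) =
      (Set.Iic N).indicator (jacobiMul a b x + μ N • jacobiMul a b y + ν N • jacobiMul a b z) := by
    rw [jacobiMul_indicator_Iic (hvanish N).1 (hvanish N).2, jacobiMul_add, jacobiMul_add,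
      jacobiMul_smul, jacobiMul_smul]
  refine jacobiGraph_iff.mpr ⟨fun N => (Set.Iic N).indicator (x + μ N • y + ν N • z),
    fun N => (Set.finite_Iic N).subset (Set.support_indicator_subset),
    tendstoL2_indicator_Iic_add_smul hx hy hz hxz hν, ?_⟩
  simpa only [hJ] using tendstoL2_indicator_Iic_add_smul hJx hJy hJz hxz hν

theorem inDomT_iff_tendsto_wronskian {x y z : ℕ → ℂ} (hx : Memℓp x 2)
    (hJx : Memℓp (jacobiMul a b x) 2) (hy : Memℓp y 2) (hJy : Memℓp (jacobiMul a b y) 2)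
    (hz : Memℓp z 2) (hJz : Memℓp (jacobiMul a b z) 2) (hzy : ∀ N, jacobiWronskian a z y N = 1) :
    inDomT a b x ↔ Tendsto (jacobiWronskian a x y) atTop (𝓝 0) ∧
      Tendsto (jacobiWronskian a x z) atTop (𝓝 0) :=
  ⟨fun ⟨_, h⟩ => ⟨h.tendsto_wronskian hy hJy, h.tendsto_wronskian hz hJz⟩,
    fun ⟨hxy, hxz⟩ => ⟨_, jacobiGraph_of_tendsto_wronskian hx hJx hy hJy hz hJz hzy hxy hxz⟩⟩

end Domain

namespace JacobiSetup

variable (S : JacobiSetup)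

theorem memℓp_p (z : ℂ) : Memℓp (fun n => S.p n z) 2 :=
  memℓp_two_iff.mpr <| (S.indet z).of_nonneg_of_le (fun _ => sq_nonneg _)
    fun _ => le_add_of_nonneg_right (sq_nonneg _)

theorem memℓp_q (z : ℂ) : Memℓp (fun n => S.q n z) 2 :=
  memℓp_two_iff.mpr <| (S.indet z).of_nonneg_of_le (fun _ => sq_nonneg _)
    fun _ => le_add_of_nonneg_left (sq_nonneg _)

theorem a_ne_zero (n : ℕ) : (S.a n : ℂ) ≠ 0 := Complex.ofReal_ne_zero.mpr (S.ha n).ne'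

theorem jacobiMul_p (z : ℂ) : jacobiMul S.a S.b (fun n => S.p n z) = z • fun n => S.p n z := by
  funext n
  rcases n with _ | n
  · simp only [jacobiMul, S.hp0, S.hp1, Pi.smul_apply, smul_eq_mul]
    field_simp [S.a_ne_zero 0]
    ring
  · simp only [jacobiMul, Pi.smul_apply, smul_eq_mul]
    linear_combination (S.hrecp n z).symm

theorem jacobiMul_q (z : ℂ) :
    jacobiMul S.a S.b (fun n => S.q n z) = z • (fun n => S.q n z) + Pi.single 0 1 := by
  funext n
  rcases n with _ | n
  · simp only [jacobiMul, S.hq0, S.hq1, Pi.add_apply, Pi.smul_apply, smul_eq_mul,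
      Pi.single_eq_same]
    field_simp [S.a_ne_zero 0]
    ring
  · simp only [jacobiMul, Pi.add_apply, Pi.smul_apply, smul_eq_mul,
      Pi.single_eq_of_ne (Nat.succ_ne_zero n)]
    linear_combination (S.hrecq n z).symm

theorem memℓp_jacobiMul_p (z : ℂ) : Memℓp (jacobiMul S.a S.b fun n => S.p n z) 2 := by
  rw [jacobiMul_p]
  exact (S.memℓp_p z).const_smul z

theorem memℓp_jacobiMul_q (z : ℂ) : Memℓp (jacobiMul S.a S.b fun n => S.q n z) 2 := by
  rw [jacobiMul_q]
  exact ((S.memℓp_q z).const_smul z).add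
    (memℓp_of_finite_support ((Set.finite_singleton 0).subset Pi.support_single_subset))

theorem wronskian_q_q (z w : ℂ) (N : ℕ) :
    jacobiWronskian S.a (fun n => S.q n z) (fun n => S.q n w) N =
      (z - w) * ∑ n ∈ Finset.range (N + 1), S.q n z * S.q n w := by
  rw [← sum_range_jacobiMul_mul_sub, jacobiMul_q, jacobiMul_q, Finset.mul_sum]
  refine Finset.sum_congr rfl fun n _ => ?_
  rcases n with _ | n
  · simp [S.hq0]
  · simp
    ring

theorem wronskian_q_p (z w : ℂ) (N : ℕ) :
    jacobiWronskian S.a (fun n => S.q n z) (fun n => S.p n w) N =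
      1 + (z - w) * ∑ n ∈ Finset.range (N + 1), S.q n z * S.p n w := by
  rw [← sum_range_jacobiMul_mul_sub, jacobiMul_q, jacobiMul_p, Finset.mul_sum,
    Finset.sum_range_succ', Finset.sum_range_succ']
  simp [S.hq0, S.hp0]
  rw [add_comm (1 : ℂ), ← Finset.sum_sub_distrib]
  exact congrArg (· + 1) (Finset.sum_congr rfl fun _ _ => by ring)

theorem wronskian_q_p_self (z : ℂ) (N : ℕ) :
    jacobiWronskian S.a (fun n => S.q n z) (fun n => S.p n z) N = 1 := by
  simp [wronskian_q_p]

theorem tendsto_wronskian_q_q (z w : ℂ) :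
    Tendsto (jacobiWronskian S.a (fun n => S.q n z) (fun n => S.q n w)) atTop
      (𝓝 (nevA S z w)) := by
  simp only [funext (S.wronskian_q_q z w)]
  exact (((S.memℓp_q z).summable_mul (S.memℓp_q w)).hasSum.tendsto_sum_nat.comp
    (tendsto_add_atTop_nat 1)).const_mul (z - w)

theorem tendsto_wronskian_q_p (z w : ℂ) :
    Tendsto (jacobiWronskian S.a (fun n => S.q n z) (fun n => S.p n w)) atTop
      (𝓝 (nevC S z w)) := by
  simp only [funext (S.wronskian_q_p z w)]
  exact ((((S.memℓp_q z).summable_mul (S.memℓp_p w)).hasSum.tendsto_sum_nat.comp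
    (tendsto_add_atTop_nat 1)).const_mul (z - w)).const_add 1

theorem inDomT_q_add_mul_q_iff (u v β : ℂ) :
    inDomT S.a S.b (fun n => S.q n u + β * S.q n v) ↔ nevA S u v = 0 ∧ β = -nevC S u v := by
  set f := fun n => S.q n u + β * S.q n v
  have hf_eq : f = (fun n => S.q n u) + β • fun n => S.q n v := rfl
  have hf : Memℓp f 2 := (S.memℓp_q u).add ((S.memℓp_q v).const_smul β)
  have hJf : Memℓp (jacobiMul S.a S.b f) 2 := by
    rw [hf_eq, jacobiMul_add, jacobiMul_smul]
    exact (S.memℓp_jacobiMul_q u).add ((S.memℓp_jacobiMul_q v).const_smul β)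
  have hWp : jacobiWronskian S.a f (fun n => S.p n v) =
      fun N => jacobiWronskian S.a (fun n => S.q n u) (fun n => S.p n v) N + β := by
    funext N
    have h1 := S.wronskian_q_p_self v N
    simp only [jacobiWronskian, f] at h1 ⊢
    linear_combination β * h1
  have hWq : jacobiWronskian S.a f (fun n => S.q n v) =
      jacobiWronskian S.a (fun n => S.q n u) (fun n => S.q n v) := by
    funext N
    simp only [jacobiWronskian, f]
    ring
  rw [inDomT_iff_tendsto_wronskian hf hJf (S.memℓp_p v) (S.memℓp_jacobiMul_p v) (S.memℓp_q v)
    (S.memℓp_jacobiMul_q v) (S.wronskian_q_p_self v), hWp, hWq]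
  have hC := (S.tendsto_wronskian_q_p u v).add_const β
  constructor
  · rintro ⟨hp, hq⟩
    exact ⟨tendsto_nhds_unique (S.tendsto_wronskian_q_q u v) hq,
      eq_neg_of_add_eq_zero_right (tendsto_nhds_unique hC hp)⟩
  · rintro ⟨hA, rfl⟩
    exact ⟨by simpa using hC, hA ▸ S.tendsto_wronskian_q_q u v⟩

end JacobiSetup

/-- There exists `β` with `𝔮_u + β 𝔮_v ∈ D(T)` iff `A(u,v) = 0`, and in the affirmative
case `β` is unique and equals `−C(u,v)`. -/
theorem stmt2 (S : JacobiSetup) (u v : ℂ) :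
    ((∃ β : ℂ, inDomT S.a S.b fun n => S.q n u + β * S.q n v) ↔ nevA S u v = 0) ∧
    ∀ β : ℂ, (inDomT S.a S.b fun n => S.q n u + β * S.q n v) → β = -nevC S u v :=
  ⟨⟨fun ⟨β, hβ⟩ => ((S.inDomT_q_add_mul_q_iff u v β).mp hβ).1,
    fun hA => ⟨_, (S.inDomT_q_add_mul_q_iff u v _).mpr ⟨hA, rfl⟩⟩⟩,
    fun β hβ => ((S.inDomT_q_add_mul_q_iff u v β).mp hβ).2⟩
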